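/- arXiv:1601.06689 — 5 statements merged into one kernel-verified Lean document; each statement's English description precedes it below -/
import Mathlib

section
/- An index coding problem is rate 1/2 feasible (i.e., there exist a finite field F and vectors V_1,…,V_n ∈ F^2 under which all conflicts are resolved) if and only if it has no internal conflicts. -/
/-!
Common definitions: an index coding problem with `n` messages (indexed by `Fin n`),
`T ≥ 1` receivers, demand sets `D j` and side-information sets `S j`.
-/

/-- An index coding problem with `n` messages. -/
structure ICP (n : ℕ) where
  T : ℕ
  hT : 1 ≤ T
  D : Fin T → Finset (Fin n)
  S : Fin T → Finset (Fin n)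
  hDS : ∀ j, Disjoint (D j) (S j)

namespace ICP

variable {n : ℕ}

/-- The interfering set `Interf_k(j)`: all messages other than `k` not in the side
information of receiver `j`, provided `k ∈ D j`; empty otherwise. -/
def Interf (P : ICP n) (k : Fin n) (j : Fin P.T) : Finset (Fin n) :=
  if k ∈ P.D j then Finset.univ \ insert k (P.S j) else ∅

/-- All conflicts are resolved by the assignment `V` of `L`-length vectors over `F`
to the messages: for every message `k` and receiver `j`, `V k` is outside the span of
the vectors assigned to `Interf_k(j)`. -/
def Resolved (P : ICP n) (F : Type) [Field F] {L : ℕ} (V : Fin n → Fin L → F) : Prop :=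
  ∀ (k : Fin n) (j : Fin P.T),
    V k ∉ Submodule.span F (V '' (P.Interf k j : Set (Fin n)))

/-- Rate `1/L` feasibility: there exist a finite field `F` and an assignment of
`L`-length vectors over `F` resolving all conflicts. -/
def RateFeasible (P : ICP n) (L : ℕ) : Prop :=
  ∃ (F : Type) (_ : Field F) (_ : Fintype F) (V : Fin n → Fin L → F),
    P.Resolved F V

/-- Adjacency in the alignment graph: `i ≠ i'` both interfere at a receiver `j`
demanding some message `k ∉ {i, i'}`. -/
def AlignAdj (P : ICP n) (i i' : Fin n) : Prop :=
  i ≠ i' ∧ ∃ (j : Fin P.T) (k : Fin n), k ∈ P.D j ∧ k ≠ i ∧ k ≠ i' ∧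
    i ∈ P.Interf k j ∧ i' ∈ P.Interf k j

/-- The alignment graph. -/
def alignGraph (P : ICP n) : SimpleGraph (Fin n) where
  Adj := P.AlignAdj
  symm := by
    constructor
    rintro a b ⟨hne, j, k, h1, h2, h3, h4, h5⟩
    exact ⟨hne.symm, j, k, h1, h3, h2, h5, h4⟩
  loopless := by constructor; rintro a ⟨hne, -⟩; exact hne rfl

/-- Two messages lie in the same alignment set (connected component of the
alignment graph). -/
def SameAlignSet (P : ICP n) (i i' : Fin n) : Prop :=
  P.alignGraph.Reachable i i'

/-- Messages `i` and `k` are in conflict. -/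
def InConflict (P : ICP n) (i k : Fin n) : Prop :=
  (∃ j, k ∈ P.D j ∧ i ∈ P.Interf k j) ∨ (∃ j, i ∈ P.D j ∧ k ∈ P.Interf i j)

/-- There is an internal conflict: a conflict between two messages lying in the
same alignment set. -/
def HasInternalConflict (P : ICP n) : Prop :=
  ∃ i k, P.InConflict i k ∧ P.SameAlignSet i k

/-- The conflict hypergraph, given as the set of unordered pairs `{{k}, Interf_k(j)}`
over all receivers `j` and all demands `k ∈ D j`. -/
def conflictHypergraph (P : ICP n) : Set (Sym2 (Finset (Fin n))) :=
  {e | ∃ (j : Fin P.T) (k : Fin n), k ∈ P.D j ∧ e = s({k}, P.Interf k j)}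

/-- The problem is groupcast: every message is demanded by at least one receiver. -/
def Groupcast (P : ICP n) : Prop := ∀ k : Fin n, ∃ j, k ∈ P.D j

/-- `i 0, i 1, i 2, i 3` form an acyclic subset of messages of size 4. -/
def AcyclicSubset4 (P : ICP n) (i : Fin 4 → Fin n) : Prop :=
  Function.Injective i ∧
    ∃ j : Fin 4 → Fin P.T, ∀ m : Fin 4, i m ∈ P.D (j m) ∧
      ∀ m' : Fin 4, m' < m → i m' ∈ P.Interf (i m) (j m)

/-- The alignment set (connected component) of the vertex `v` has both a fork
(a vertex of degree at least 3) and a cycle all of whose vertices lie in it. -/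
def HasForkAndCycle (P : ICP n) (v : Fin n) : Prop :=
  (∃ u, P.alignGraph.Reachable v u ∧ 3 ≤ (P.alignGraph.neighborSet u).ncard) ∧
  (∃ (u : Fin n) (c : P.alignGraph.Walk u u), c.IsCycle ∧
      ∀ x ∈ c.support, P.alignGraph.Reachable v x)

/-- A triangular interfering set: a 3-element set of messages simultaneously
interfering at some receiver, at least two of which are in conflict. -/
def TriangularSet (P : ICP n) (W : Finset (Fin n)) : Prop :=
  W.card = 3 ∧ (∃ (j : Fin P.T) (k : Fin n), k ∈ P.D j ∧ W ⊆ P.Interf k j) ∧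
    ∃ i i', i ∈ W ∧ i' ∈ W ∧ i ≠ i' ∧ P.InConflict i i'

/-- Two distinct triangular interfering sets are adjacent: they meet in exactly
two messages which are in conflict. -/
def TriAdj (P : ICP n) (W1 W2 : Finset (Fin n)) : Prop :=
  P.TriangularSet W1 ∧ P.TriangularSet W2 ∧ W1 ≠ W2 ∧
    ∃ i i', i ≠ i' ∧ W1 ∩ W2 = {i, i'} ∧ P.InConflict i i'

/-- Two triangular interfering sets are connected: some finite sequence of
triangular interfering sets, with consecutive members adjacent, joins them. -/
def TriConnected (P : ICP n) (W1 W2 : Finset (Fin n)) : Prop :=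
  P.TriangularSet W1 ∧ P.TriangularSet W2 ∧ Relation.ReflTransGen P.TriAdj W1 W2

/-- `W'` is a type-2 alignment set: the union of a maximal family of pairwise
connected triangular interfering sets. -/
def IsType2AlignSet (P : ICP n) (W' : Finset (Fin n)) : Prop :=
  ∃ 𝒯 : Set (Finset (Fin n)), 𝒯.Nonempty ∧
    (∀ W ∈ 𝒯, P.TriangularSet W) ∧
    (∀ W1 ∈ 𝒯, ∀ W2 ∈ 𝒯, P.TriConnected W1 W2) ∧
    (∀ 𝒯' : Set (Finset (Fin n)), 𝒯 ⊆ 𝒯' → (∀ W ∈ 𝒯', P.TriangularSet W) →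
      (∀ W1 ∈ 𝒯', ∀ W2 ∈ 𝒯', P.TriConnected W1 W2) → 𝒯' = 𝒯) ∧
    (W' : Set (Fin n)) = ⋃ W ∈ 𝒯, (W : Set (Fin n))

/-- The interfering set of message `k` at receiver `j` in the `W'`-restricted
index coding problem (its demand sets are `D j ∩ W'`, side information `S j ∩ W'`,
and message set `W'`). -/
def rInterf (P : ICP n) (W' : Finset (Fin n)) (k : Fin n) (j : Fin P.T) :
    Finset (Fin n) :=
  if k ∈ P.D j ∩ W' then P.Interf k j ∩ W' else ∅

/-- Adjacency in the alignment graph of the `W'`-restricted problem. -/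
def rAlignAdj (P : ICP n) (W' : Finset (Fin n)) (i i' : Fin n) : Prop :=
  i ≠ i' ∧ ∃ (j : Fin P.T) (k : Fin n), k ∈ P.D j ∩ W' ∧ k ≠ i ∧ k ≠ i' ∧
    i ∈ P.rInterf W' k j ∧ i' ∈ P.rInterf W' k j

/-- The alignment graph of the `W'`-restricted problem (messages outside `W'`
are isolated vertices). -/
def rAlignGraph (P : ICP n) (W' : Finset (Fin n)) : SimpleGraph (Fin n) where
  Adj := P.rAlignAdj W'
  symm := by
    constructor
    rintro a b ⟨hne, j, k, h1, h2, h3, h4, h5⟩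
    exact ⟨hne.symm, j, k, h1, h3, h2, h5, h4⟩
  loopless := by constructor; rintro a ⟨hne, -⟩; exact hne rfl

/-- Conflict in the `W'`-restricted problem. -/
def rInConflict (P : ICP n) (W' : Finset (Fin n)) (i k : Fin n) : Prop :=
  (∃ j, k ∈ P.D j ∩ W' ∧ i ∈ P.rInterf W' k j) ∨
  (∃ j, i ∈ P.D j ∩ W' ∧ k ∈ P.rInterf W' i j)

/-- There is a `W'`-restricted internal conflict: a conflict of the restricted
problem between two messages in the same `W'`-restricted alignment set. -/
def HasRestrictedInternalConflict (P : ICP n) (W' : Finset (Fin n)) : Prop :=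
  ∃ i k, i ∈ W' ∧ k ∈ W' ∧ P.rInConflict W' i k ∧ (P.rAlignGraph W').Reachable i k

/-- The `W'`-restricted index coding problem is rate `1/2` feasible: there exist a
finite field `F` and vectors `V i ∈ F²` for `i ∈ W'` such that for every `k ∈ W'`
and every receiver `j`, `V k ∉ span {V i : i ∈ Interf_k(j) ∩ W'}`. -/
def RestrictedRateHalfFeasible (P : ICP n) (W' : Finset (Fin n)) : Prop :=
  ∃ (F : Type) (_ : Field F) (_ : Fintype F) (V : Fin n → Fin 2 → F),
    ∀ k ∈ W', ∀ j : Fin P.T,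
      V k ∉ Submodule.span F (V '' ((P.Interf k j ∩ W') : Set (Fin n)))

end ICP

/-! A rate-`1/2` code puts every message on a line of `F²`. The span of `Interf_k(j)` misses `V k`,
so it is at most a line; hence two messages interfering together span the same line, and by
induction all messages of an alignment set do. A conflict inside an alignment set would put
`V k` on the line of a message interfering with it. Conversely, if there is no internal conflict,
give each alignment set its own line `F ∙ ![1, x]`: the interfering messages of a receiver lie in
one alignment set, and the demanded message lies on a different line. -/

open Submodule Module SimpleGraph

theorem Submodule.eq_span_singleton_of_finrank_eq_two {K E : Type*} [DivisionRing K]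
    [AddCommGroup E] [Module K E] (hE : finrank K E = 2) {W : Submodule K E} (hW : W ≠ ⊤)
    {v : E} (hvW : v ∈ W) (hv : v ≠ 0) : W = K ∙ v := by
  have : FiniteDimensional K E := .of_finrank_pos (by omega)
  have hWlt := Submodule.finrank_lt hW
  refine (eq_of_le_of_finrank_le ((span_singleton_le_iff_mem v W).2 hvW) ?_).symm
  rw [finrank_span_singleton hv]
  omega

theorem vecCons_one_mem_span_singleton_iff {F : Type*} [Field F] {x y : F} :
    ![1, x] ∈ F ∙ ![1, y] ↔ x = y := by
  refine ⟨fun h => ?_, fun h => h ▸ mem_span_singleton_self _⟩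
  obtain ⟨c, hc⟩ := mem_span_singleton.1 h
  have hc1 : c = 1 := by simpa using congrFun hc 0
  simpa [hc1] using (congrFun hc 1).symm

theorem exists_finite_field_embedding (ι : Type*) [Finite ι] :
    ∃ (F : Type) (_ : Field F) (_ : Fintype F), Nonempty (ι ↪ F) := by
  have := Fintype.ofFinite ι
  obtain ⟨p, hp_le, hp⟩ := Nat.exists_infinite_primes (Fintype.card ι)
  have := Fact.mk hp
  exact ⟨ZMod p, inferInstance, inferInstance,
    Function.Embedding.nonempty_of_card_le (by rwa [ZMod.card])⟩

namespace ICP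

variable {n : ℕ} (P : ICP n)

theorem mem_D_of_mem_interf {i k : Fin n} {j : Fin P.T} (h : i ∈ P.Interf k j) : k ∈ P.D j := by
  unfold Interf at h
  split_ifs at h with hk
  · exact hk
  · simp at h

theorem ne_of_mem_interf {i k : Fin n} {j : Fin P.T} (h : i ∈ P.Interf k j) : i ≠ k := by
  unfold Interf at h
  split_ifs at h
  · simp only [Finset.mem_sdiff, Finset.mem_insert] at h
    exact fun hik => h.2 (.inl hik)
  · simp at h

theorem reachable_of_mem_interf {i i' k : Fin n} {j : Fin P.T} (hi : i ∈ P.Interf k j)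
    (hi' : i' ∈ P.Interf k j) : P.alignGraph.Reachable i i' := by
  by_cases hii' : i = i'
  · exact hii' ▸ .refl i
  · exact Adj.reachable ⟨hii', j, k, P.mem_D_of_mem_interf hi, (P.ne_of_mem_interf hi).symm,
      (P.ne_of_mem_interf hi').symm, hi, hi'⟩

theorem span_image_interf_le {F : Type*} [Field F] {L : ℕ} (V : Fin n → Fin L → F) {i k : Fin n}
    {j : Fin P.T} (hi : i ∈ P.Interf k j) :
    F ∙ V i ≤ span F (V '' (P.Interf k j : Set (Fin n))) :=
  (span_singleton_le_iff_mem _ _).2 (subset_span ⟨i, hi, rfl⟩)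

namespace Resolved

variable {P} {F : Type} [Field F] {V : Fin n → Fin 2 → F} (hV : P.Resolved F V)
include hV

theorem ne_zero (m : Fin n) : V m ≠ 0 := fun h0 =>
  hV m ⟨0, P.hT⟩ (h0 ▸ zero_mem _)

theorem span_singleton_eq_of_adj {a b : Fin n} (hab : P.alignGraph.Adj a b) :
    F ∙ V a = F ∙ V b := by
  obtain ⟨-, j, k, -, -, -, ha, hb⟩ := hab
  have hproper : span F (V '' (P.Interf k j : Set (Fin n))) ≠ ⊤ :=
    fun htop => hV k j (htop ▸ mem_top)
  have hline {c : Fin n} (hc : c ∈ P.Interf k j) := eq_span_singleton_of_finrank_eq_two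
    (by simp) hproper (P.span_image_interf_le V hc (mem_span_singleton_self _)) (hV.ne_zero c)
  rw [← hline ha, ← hline hb]

theorem span_singleton_eq_of_reachable {a b : Fin n} (hab : P.alignGraph.Reachable a b) :
    F ∙ V a = F ∙ V b := by
  obtain ⟨w⟩ := hab
  induction w with
  | nil => rfl
  | cons h _ ih => exact (hV.span_singleton_eq_of_adj h).trans ih

theorem not_hasInternalConflict : ¬ P.HasInternalConflict := by
  rintro ⟨i, k, hconf, hreach⟩
  have hline := hV.span_singleton_eq_of_reachable hreach
  rcases hconf with ⟨j, -, hi⟩ | ⟨j, -, hk⟩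
  · exact hV k j (P.span_image_interf_le V hi (hline ▸ mem_span_singleton_self _))
  · exact hV i j (P.span_image_interf_le V hk (hline.symm ▸ mem_span_singleton_self _))

end Resolved

theorem resolved_of_injective_on_components {F : Type} [Field F]
    {e : P.alignGraph.ConnectedComponent → F} (he : Function.Injective e)
    (hP : ¬ P.HasInternalConflict) :
    P.Resolved F fun i => ![1, e (P.alignGraph.connectedComponentMk i)] := by
  intro k j hk
  set V : Fin n → Fin 2 → F := fun i => ![1, e (P.alignGraph.connectedComponentMk i)]
  obtain ⟨i, hi⟩ : (P.Interf k j).Nonempty := by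
    refine Finset.nonempty_iff_ne_empty.2 fun hempty => ?_
    simp only [hempty, Finset.coe_empty, Set.image_empty, span_empty, mem_bot] at hk
    exact one_ne_zero (congrFun hk 0 : (1 : F) = 0)
  have hlines : V '' (P.Interf k j : Set (Fin n)) ⊆ {V i} := by
    rintro _ ⟨i', hi', rfl⟩
    simp only [Set.mem_singleton_iff, V,
      ConnectedComponent.sound (P.reachable_of_mem_interf hi' hi)]
  have hki := he (vecCons_one_mem_span_singleton_iff.1 (span_mono hlines hk))
  exact hP ⟨i, k, .inl ⟨j, P.mem_D_of_mem_interf hi, hi⟩,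
    (ConnectedComponent.eq.1 hki).symm⟩

end ICP

/-- An index coding problem is rate `1/2` feasible iff it has no
internal conflicts. -/
theorem rateHalf_feasible_iff_no_internal_conflict {n : ℕ} (P : ICP n) :
    P.RateFeasible 2 ↔ ¬ P.HasInternalConflict := by
  constructor
  · rintro ⟨F, _, _, V, hV⟩
    exact hV.not_hasInternalConflict
  · intro hP
    obtain ⟨F, hF, hFfin, ⟨e⟩⟩ := exists_finite_field_embedding P.alignGraph.ConnectedComponent
    exact ⟨F, hF, hFfin, _, P.resolved_of_injective_on_components e.injective hP⟩
end

section
/- Suppose an index coding problem has no internal conflicts. Let F be a field, L ≥ 1, and let V_1,…,V_n ∈ F^L be nonzero vectors such that V_i = V_{i'} whenever i and i' lie in the same alignment set, and such that V_i and V_{i'} are linearly independent whenever i and i' lie in distinct alignment sets. Then all conflicts are resolved under this assignment. -/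
/-!
The interfering messages of a demand `k` at a receiver are pairwise adjacent in the alignment
graph, so they all carry one vector; each of them is in conflict with `k`, hence lies in another
alignment set, so that vector is linearly independent of `V k`.
-/

theorem Submodule.notMem_span_of_subsingleton {K V : Type*} [DivisionRing K] [AddCommGroup V]
    [Module K V] {x : V} {t : Set V} (ht : t.Subsingleton) (hx : x ≠ 0)
    (hind : ∀ y ∈ t, LinearIndependent K ![x, y]) : x ∉ Submodule.span K t := by
  rcases ht.eq_empty_or_singleton with rfl | ⟨y, rfl⟩
  · simpa using hx
  · simpa using (linearIndependent_finCons.mp (hind y rfl)).2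

namespace ICP

variable {n : ℕ} (P : ICP n) {i i' k : Fin n} {j : Fin P.T}

theorem mem_interf_iff : i ∈ P.Interf k j ↔ k ∈ P.D j ∧ i ≠ k ∧ i ∉ P.S j := by
  unfold Interf
  split_ifs with hk <;> simp [hk]

theorem sameAlignSet_of_mem_interf (hi : i ∈ P.Interf k j) (hi' : i' ∈ P.Interf k j) :
    P.SameAlignSet i i' := by
  rcases eq_or_ne i i' with rfl | hne
  · exact SimpleGraph.Reachable.rfl
  obtain ⟨hk, hik, -⟩ := P.mem_interf_iff.mp hi
  obtain ⟨-, hi'k, -⟩ := P.mem_interf_iff.mp hi'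
  exact SimpleGraph.Adj.reachable ⟨hne, j, k, hk, hik.symm, hi'k.symm, hi, hi'⟩

theorem not_sameAlignSet_of_mem_interf (hnoint : ¬ P.HasInternalConflict)
    (hi : i ∈ P.Interf k j) : ¬ P.SameAlignSet k i := fun hsame =>
  hnoint ⟨i, k, Or.inl ⟨j, (P.mem_interf_iff.mp hi).1, hi⟩, hsame.symm⟩

end ICP

theorem no_internal_conflict_assignment_resolved_general {n : ℕ} (P : ICP n)
    (hnoint : ¬ P.HasInternalConflict)
    (F : Type) [Field F] (L : ℕ) (V : Fin n → Fin L → F)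
    (hnz : ∀ i, V i ≠ 0)
    (heq : ∀ i i', P.SameAlignSet i i' → V i = V i')
    (hind : ∀ i i', ¬ P.SameAlignSet i i' → LinearIndependent F ![V i, V i']) :
    P.Resolved F V := by
  intro k j
  have hconst : (V '' (P.Interf k j : Set (Fin n))).Subsingleton := by
    rintro _ ⟨i, hi, rfl⟩ _ ⟨i', hi', rfl⟩
    exact heq i i' (P.sameAlignSet_of_mem_interf hi hi')
  refine Submodule.notMem_span_of_subsingleton hconst (hnz k) ?_
  rintro _ ⟨i, hi, rfl⟩
  exact hind k i (P.not_sameAlignSet_of_mem_interf hnoint hi)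

/-- If there are no internal conflicts, then any assignment of
nonzero vectors which is constant on alignment sets and assigns linearly independent
vectors to distinct alignment sets resolves all conflicts. -/
theorem no_internal_conflict_assignment_resolved {n : ℕ} (P : ICP n)
    (hnoint : ¬ P.HasInternalConflict)
    (F : Type) [Field F] (L : ℕ) (hL : 1 ≤ L) (V : Fin n → Fin L → F)
    (hnz : ∀ i, V i ≠ 0)
    (heq : ∀ i i', P.SameAlignSet i i' → V i = V i')
    (hind : ∀ i i', ¬ P.SameAlignSet i i' → LinearIndependent F ![V i, V i']) :
    P.Resolved F V :=
  no_internal_conflict_assignment_resolved_general P hnoint F L V hnz heq hind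
end

section
/- Let i_1, i_2, i_3, i_4 be an acyclic subset of messages of size 4 of an index coding problem. Then for any field F, any L ≥ 1, and any vectors V_1,…,V_n ∈ F^L under which all conflicts are resolved, the four vectors V_{i_1}, V_{i_2}, V_{i_3}, V_{i_4} are linearly independent. -/
theorem linearIndependent_of_notMem_span_image_Iio {K V : Type*} [DivisionRing K]
    [AddCommGroup V] [Module K V] {k : ℕ} {v : Fin k → V}
    (hv : ∀ m, v m ∉ Submodule.span K (v '' Set.Iio m)) : LinearIndependent K v := by
  induction k with
  | zero => exact linearIndependent_empty_type
  | succ k ih =>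
    rw [linearIndependent_finSucc']
    constructor
    · refine ih fun m hmem => hv m.castSucc (Submodule.span_mono ?_ hmem)
      rintro _ ⟨m', hm', rfl⟩
      exact ⟨m'.castSucc, Fin.castSucc_lt_castSucc_iff.2 hm', rfl⟩
    · refine fun hmem => hv (Fin.last k) (Submodule.span_mono ?_ hmem)
      rintro _ ⟨m, rfl⟩
      exact ⟨m.castSucc, Fin.castSucc_lt_last m, rfl⟩

theorem acyclic_subset_linearIndependent_general {n : ℕ} (P : ICP n)
    (i : Fin 4 → Fin n) (hi : P.AcyclicSubset4 i)
    (F : Type) [Field F] (L : ℕ) (V : Fin n → Fin L → F)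
    (hres : P.Resolved F V) :
    LinearIndependent F (fun m : Fin 4 => V (i m)) := by
  obtain ⟨-, j, hj⟩ := hi
  refine linearIndependent_of_notMem_span_image_Iio fun m hmem =>
    hres (i m) (j m) (Submodule.span_mono ?_ hmem)
  rintro _ ⟨m', hm', rfl⟩
  exact ⟨i m', (hj m).2 m' hm', rfl⟩

/-- If `i` is an acyclic subset of messages of size 4, then under
any conflict-resolving assignment the four corresponding vectors are linearly
independent. -/
theorem acyclic_subset_linearIndependent {n : ℕ} (P : ICP n)
    (i : Fin 4 → Fin n) (hi : P.AcyclicSubset4 i)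
    (F : Type) [Field F] (L : ℕ) (hL : 1 ≤ L) (V : Fin n → Fin L → F)
    (hres : P.Resolved F V) :
    LinearIndependent F (fun m : Fin 4 => V (i m)) :=
  acyclic_subset_linearIndependent_general P i hi F L V hres
end

section
/- Let F be any field and let V_1,…,V_n ∈ F^3 be vectors under which all conflicts of an index coding problem are resolved. Then every triangular interfering set W'' of the problem satisfies dim span{V_i : i ∈ W''} = 2. -/
/-!
The span of `V '' W''` lies in the span of the vectors of an interfering set `Interf_k(j)`,
which misses `V k` and is therefore a proper subspace of `F³`: dimension at most 2. Two
messages `i, i'` of `W''` in conflict, say `i ∈ Interf_{i'}(j)`, have `V i' ∉ span {V i}`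
with `V i ≠ 0`, so they contribute two independent vectors: dimension at least 2.
-/

open Module Submodule

section LinearAlgebra

variable {K V : Type*} [DivisionRing K] [AddCommGroup V] [Module K V]

theorem linearIndependent_pair_of_notMem_span_singleton {x y : V} (hx : x ≠ 0)
    (hy : y ∉ K ∙ x) : LinearIndependent K ![x, y] :=
  (LinearIndependent.pair_iff' hx).2 fun a hax =>
    hy (hax ▸ smul_mem _ a (mem_span_singleton_self x))

theorem finrank_span_lt_finrank_of_notMem [FiniteDimensional K V] {s : Set V} {v : V}
    (hv : v ∉ span K s) : finrank K (span K s) < finrank K V :=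
  Submodule.finrank_lt fun htop => hv (htop ▸ mem_top)

theorem two_le_finrank_span_of_pair_mem [FiniteDimensional K V] {s : Set V} {x y : V}
    (hxy : LinearIndependent K ![x, y]) (hx : x ∈ s) (hy : y ∈ s) :
    2 ≤ finrank K (span K s) := by
  have hpair : Set.range ![x, y] ⊆ s := by
    simp [Set.insert_subset_iff, hx, hy]
  calc 2 = finrank K (span K (Set.range ![x, y])) := by simp [finrank_span_eq_card hxy]
    _ ≤ finrank K (span K s) := Submodule.finrank_mono (span_mono hpair)

end LinearAlgebra

namespace ICP

variable {n L : ℕ} {P : ICP n} {F : Type} [Field F] {V : Fin n → Fin L → F}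

theorem Resolved.ne_zero_s9 (hres : P.Resolved F V) (k : Fin n) (j : Fin P.T) : V k ≠ 0 :=
  fun h => hres k j (h ▸ zero_mem _)

theorem Resolved.notMem_span_of_subset_interf (hres : P.Resolved F V) {k : Fin n}
    {j : Fin P.T} {W : Finset (Fin n)} (hW : W ⊆ P.Interf k j) :
    V k ∉ span F (V '' (W : Set (Fin n))) :=
  fun h => hres k j (span_mono (Set.image_mono (Finset.coe_subset.2 hW)) h)

theorem Resolved.linearIndependent_of_inConflict (hres : P.Resolved F V) {i k : Fin n}
    (h : P.InConflict i k) : LinearIndependent F ![V i, V k] := by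
  rcases h with ⟨j, -, hi⟩ | ⟨j, -, hk⟩
  · have hVk : V k ∉ F ∙ V i := by
      simpa using hres.notMem_span_of_subset_interf (Finset.singleton_subset_iff.2 hi)
    exact linearIndependent_pair_of_notMem_span_singleton (hres.ne_zero_s9 i j) hVk
  · have hVi : V i ∉ F ∙ V k := by
      simpa using hres.notMem_span_of_subset_interf (Finset.singleton_subset_iff.2 hk)
    exact LinearIndependent.pair_symm_iff.1
      (linearIndependent_pair_of_notMem_span_singleton (hres.ne_zero_s9 k j) hVi)

end ICP

/-- If length-3 vectors `V` resolve all conflicts, then every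
triangular interfering set spans a space of dimension exactly 2. -/
theorem triangularSet_span_two_dim {n : ℕ} (P : ICP n) (F : Type) [Field F]
    (V : Fin n → Fin 3 → F) (hres : P.Resolved F V)
    (W'' : Finset (Fin n)) (hW : P.TriangularSet W'') :
    Module.finrank F (Submodule.span F (V '' (W'' : Set (Fin n)))) = 2 := by
  obtain ⟨-, ⟨j, k, -, hsub⟩, i, i', hi, hi', -, hconf⟩ := hW
  have hlt : finrank F (span F (V '' (W'' : Set (Fin n)))) < 3 := by
    simpa using finrank_span_lt_finrank_of_notMem (hres.notMem_span_of_subset_interf hsub)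
  have hge : 2 ≤ finrank F (span F (V '' (W'' : Set (Fin n)))) :=
    two_le_finrank_span_of_pair_mem (hres.linearIndependent_of_inConflict hconf)
      (Set.mem_image_of_mem V hi) (Set.mem_image_of_mem V hi')
  omega
end

section
/- Let F be any field and let V_1,…,V_n ∈ F^3 be vectors under which all conflicts of an index coding problem are resolved. Then every type-2 alignment set W' of the problem satisfies dim span{V_i : i ∈ W'} = 2; i.e., all messages of a type-2 alignment set are assigned vectors from a vector space of dimension two. -/
/-!
An interfering set spans a proper subspace of `F³`, hence one of dimension at most two, while
two messages in conflict get linearly independent vectors. So a triangular interfering set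
spans a plane, namely the span of any conflicting pair inside it. Adjacent triangular sets share
such a pair and therefore span the same plane; along chains of adjacent sets all members of the
family span one plane, which is then also the span of their union.
-/

theorem Submodule.two_le_finrank_of_notMem_span_singleton {K E : Type*} [DivisionRing K]
    [AddCommGroup E] [Module K E] [FiniteDimensional K E] {p : Submodule K E} {a b : E}
    (ha0 : a ≠ 0) (ha : a ∈ p) (hb : b ∈ p) (hab : b ∉ K ∙ a) :
    2 ≤ Module.finrank K p := by
  have hlt : K ∙ a < p :=
    lt_of_le_of_ne ((Submodule.span_singleton_le_iff_mem a p).2 ha) fun h => hab (h ▸ hb)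
  have := Submodule.finrank_lt_finrank_of_lt hlt
  rw [finrank_span_singleton ha0] at this
  omega

theorem Submodule.span_image_biUnion_of_forall_eq {ι M R : Type*} [Semiring R]
    [AddCommMonoid M] [Module R M] {f : ι → M} {𝒯 : Set (Finset ι)} (h𝒯 : 𝒯.Nonempty)
    {s : Submodule R M} (hs : ∀ W ∈ 𝒯, span R (f '' (W : Set ι)) = s) :
    span R (f '' ⋃ W ∈ 𝒯, (W : Set ι)) = s := by
  rw [Set.image_iUnion₂, Submodule.span_iUnion₂]
  calc ⨆ W ∈ 𝒯, span R (f '' (W : Set ι)) = ⨆ W ∈ 𝒯, s := biSup_congr hs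
    _ = s := biSup_const h𝒯

namespace ICP

variable {n : ℕ} {P : ICP n} {F : Type} [Field F]

namespace Resolved

section

variable {L : ℕ} {V : Fin n → Fin L → F}

theorem ne_zero_s10 (hres : P.Resolved F V) (k : Fin n) : V k ≠ 0 := fun h =>
  hres k ⟨0, P.hT⟩ (h ▸ Submodule.zero_mem _)

theorem notMem_span_singleton_of_mem_interf (hres : P.Resolved F V) {i k : Fin n}
    {j : Fin P.T} (hi : i ∈ P.Interf k j) : V k ∉ F ∙ V i := fun h =>
  hres k j <| (Submodule.span_singleton_le_iff_mem _ _).2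
    (Submodule.subset_span (Set.mem_image_of_mem V hi)) h

theorem two_le_finrank_of_inConflict (hres : P.Resolved F V) {i i' : Fin n}
    (hc : P.InConflict i i') {p : Submodule F (Fin L → F)} (hi : V i ∈ p) (hi' : V i' ∈ p) :
    2 ≤ Module.finrank F p := by
  rcases hc with ⟨j, -, hI⟩ | ⟨j, -, hI⟩
  · exact Submodule.two_le_finrank_of_notMem_span_singleton (hres.ne_zero_s10 i) hi hi'
      (hres.notMem_span_singleton_of_mem_interf hI)
  · exact Submodule.two_le_finrank_of_notMem_span_singleton (hres.ne_zero_s10 i') hi' hi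
      (hres.notMem_span_singleton_of_mem_interf hI)

theorem finrank_span_lt_of_subset_interf (hres : P.Resolved F V) {W : Finset (Fin n)}
    {k : Fin n} {j : Fin P.T} (hW : W ⊆ P.Interf k j) :
    Module.finrank F (Submodule.span F (V '' (W : Set (Fin n)))) < L := by
  have hle : Submodule.span F (V '' (W : Set (Fin n))) ≤
      Submodule.span F (V '' (P.Interf k j : Set (Fin n))) :=
    Submodule.span_mono (Set.image_mono (by exact_mod_cast hW))
  have hne : Submodule.span F (V '' (W : Set (Fin n))) ≠ ⊤ := fun htop =>
    hres k j (hle (htop ▸ Submodule.mem_top))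
  simpa using Submodule.finrank_lt hne

end

variable {V : Fin n → Fin 3 → F}

theorem finrank_span_of_triangularSet (hres : P.Resolved F V) {W : Finset (Fin n)}
    (hW : P.TriangularSet W) :
    Module.finrank F (Submodule.span F (V '' (W : Set (Fin n)))) = 2 := by
  obtain ⟨-, ⟨j, k, -, hsub⟩, i, i', hi, hi', -, hc⟩ := hW
  have h2 := hres.two_le_finrank_of_inConflict hc
    (Submodule.subset_span (Set.mem_image_of_mem V hi))
    (Submodule.subset_span (Set.mem_image_of_mem V hi'))
  have h3 := hres.finrank_span_lt_of_subset_interf hsub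
  omega

theorem span_pair_eq_span_of_triangularSet (hres : P.Resolved F V) {W : Finset (Fin n)}
    (hW : P.TriangularSet W) {i i' : Fin n} (hi : i ∈ W) (hi' : i' ∈ W)
    (hc : P.InConflict i i') :
    Submodule.span F {V i, V i'} = Submodule.span F (V '' (W : Set (Fin n))) := by
  refine Submodule.eq_of_le_of_finrank_le (Submodule.span_le.2 ?_) ?_
  · exact Set.insert_subset (Submodule.subset_span (Set.mem_image_of_mem V hi))
      (Set.singleton_subset_iff.2 (Submodule.subset_span (Set.mem_image_of_mem V hi')))
  · rw [hres.finrank_span_of_triangularSet hW]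
    exact hres.two_le_finrank_of_inConflict hc (Submodule.subset_span (Set.mem_insert _ _))
      (Submodule.subset_span (Set.mem_insert_of_mem _ (Set.mem_singleton _)))

theorem span_eq_of_triAdj (hres : P.Resolved F V) {W₁ W₂ : Finset (Fin n)}
    (h : P.TriAdj W₁ W₂) :
    Submodule.span F (V '' (W₁ : Set (Fin n))) =
      Submodule.span F (V '' (W₂ : Set (Fin n))) := by
  obtain ⟨hW₁, hW₂, -, i, i', -, hcap, hc⟩ := h
  have hi : i ∈ W₁ ∩ W₂ := hcap ▸ Finset.mem_insert_self _ _
  have hi' : i' ∈ W₁ ∩ W₂ := hcap ▸ Finset.mem_insert_of_mem (Finset.mem_singleton_self _)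
  rw [Finset.mem_inter] at hi hi'
  rw [← hres.span_pair_eq_span_of_triangularSet hW₁ hi.1 hi'.1 hc,
    hres.span_pair_eq_span_of_triangularSet hW₂ hi.2 hi'.2 hc]

theorem span_eq_of_reflTransGen_triAdj (hres : P.Resolved F V) {W₁ W₂ : Finset (Fin n)}
    (h : Relation.ReflTransGen P.TriAdj W₁ W₂) :
    Submodule.span F (V '' (W₁ : Set (Fin n))) =
      Submodule.span F (V '' (W₂ : Set (Fin n))) := by
  induction h with
  | refl => rfl
  | tail _ hadj ih => exact ih.trans (hres.span_eq_of_triAdj hadj)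

end Resolved

end ICP

/-- If length-3 vectors `V` resolve all conflicts, then every
type-2 alignment set spans a space of dimension exactly 2. -/
theorem type2AlignSet_span_two_dim {n : ℕ} (P : ICP n) (F : Type) [Field F]
    (V : Fin n → Fin 3 → F) (hres : P.Resolved F V)
    (W' : Finset (Fin n)) (hW : P.IsType2AlignSet W') :
    Module.finrank F (Submodule.span F (V '' (W' : Set (Fin n)))) = 2 := by
  obtain ⟨𝒯, ⟨W₀, hW₀⟩, htri, hconn, -, hunion⟩ := hW
  have hspan : Submodule.span F (V '' (W' : Set (Fin n))) =
      Submodule.span F (V '' (W₀ : Set (Fin n))) := by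
    rw [hunion]
    exact Submodule.span_image_biUnion_of_forall_eq ⟨W₀, hW₀⟩ fun W hW =>
      (hres.span_eq_of_reflTransGen_triAdj (hconn W₀ hW₀ W hW).2.2).symm
  rw [hspan]
  exact hres.finrank_span_of_triangularSet (htri W₀ hW₀)
end
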